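/- arXiv:2012.10434 — 4 statements merged into one kernel-verified Lean document; each statement's English description precedes it below -/
import Mathlib

section
/- If I is an irreducible ideal of a numerical semigroup Λ and G_I(Λ) has at least 8 vertices, then G_I(Λ) contains a subgraph isomorphic to the complete graph K_5, and hence G_I(Λ) is not planar. -/
/-- A numerical semigroup: a cofinite additive submonoid of ℕ. -/
def IsNumericalSemigroup (Λ : Set ℕ) : Prop :=
  0 ∈ Λ ∧ (∀ a ∈ Λ, ∀ b ∈ Λ, a + b ∈ Λ) ∧ (Λᶜ).Finite

/-- An ideal of a numerical semigroup: a nonempty subset `I ⊆ Λ` with `I + Λ ⊆ I`. -/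
def IsIdeal (Λ I : Set ℕ) : Prop :=
  I.Nonempty ∧ I ⊆ Λ ∧ ∀ i ∈ I, ∀ s ∈ Λ, i + s ∈ I

/-- An irreducible ideal: one that is not the intersection of two proper ideals
each properly containing it. -/
def IsIrreducibleIdeal (Λ I : Set ℕ) : Prop :=
  IsIdeal Λ I ∧
    ¬ ∃ J K : Set ℕ, IsIdeal Λ J ∧ IsIdeal Λ K ∧ J ≠ Λ ∧ K ≠ Λ ∧
      I ⊂ J ∧ I ⊂ K ∧ I = J ∩ K

/-- The graph `G_I(Λ)`: vertices are the nonzero elements of `Λ \ I`,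
and `x ~ y` iff `x + y ∈ I`. -/
def semigroupGraph (Λ I : Set ℕ) : SimpleGraph ↥((Λ \ I) \ {0}) where
  Adj x y := (x : ℕ) ≠ (y : ℕ) ∧ (x : ℕ) + (y : ℕ) ∈ I
  symm := by
    constructor
    intro x y h
    exact ⟨fun e => h.1 e.symm, by rw [add_comm]; exact h.2⟩
  loopless := by constructor; intro x h; exact h.1 rfl

/-- `B(x) = {y ∈ Λ : x - y ∈ Λ}` (i.e. `y + z = x` for some `z ∈ Λ`). -/
def Bset (Λ : Set ℕ) (x : ℕ) : Set ℕ :=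
  {y ∈ Λ | ∃ z ∈ Λ, y + z = x}

/-- The minimal generating set of a numerical semigroup: the nonzero elements
that are not sums of two nonzero elements. -/
def MinimalGenerators (Λ : Set ℕ) : Set ℕ :=
  {a ∈ Λ | a ≠ 0 ∧ ¬ ∃ b ∈ Λ, ∃ c ∈ Λ, b ≠ 0 ∧ c ≠ 0 ∧ a = b + c}

/-- `L_x^{(p)}`: representations of `x` as a positive-integer combination of
exactly `p` distinct minimal generators of `Λ`, encoded as finitely supported
functions from generators to positive coefficients. -/
def Lrep (Λ : Set ℕ) (x : ℕ) (p : ℕ) : Set (ℕ →₀ ℕ) :=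
  {u | (↑u.support : Set ℕ) ⊆ MinimalGenerators Λ ∧ u.support.card = p ∧
    u.sum (fun a c => c * a) = x}

/-- `G` contains a subdivision of `H`: branch vertices joined by internally
disjoint paths. -/
def SimpleGraph.ContainsSubdivision {V W : Type*} (G : SimpleGraph V)
    (H : SimpleGraph W) : Prop :=
  ∃ b : W ↪ V, ∃ P : ∀ i j : W, H.Adj i j → G.Walk (b i) (b j),
    (∀ i j (h : H.Adj i j), (P i j h).IsPath) ∧
    (∀ i j (h : H.Adj i j) (k : W), b k ∈ (P i j h).support → k = i ∨ k = j) ∧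
    (∀ i j (h : H.Adj i j) (i' j' : W) (h' : H.Adj i' j'),
      ({i, j} : Set W) ≠ {i', j'} →
      ∀ v, v ∈ (P i j h).support → v ∈ (P i' j' h').support →
        v = b i ∨ v = b j)

/-- Planarity via Kuratowski's criterion: no subgraph homeomorphic to
`K₅` or `K₃,₃`. -/
def SimpleGraph.Planar {V : Type*} (G : SimpleGraph V) : Prop :=
  ¬ G.ContainsSubdivision (⊤ : SimpleGraph (Fin 5)) ∧
  ¬ G.ContainsSubdivision (completeBipartiteGraph (Fin 3) (Fin 3))

/-!
If `Λ \ I` is nonempty, irreducibility forces it to have a single maximal element `x` for the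
order of `Λ` (two of them, `a ≠ b`, would give `I = (I ∪ {a}) ∩ (I ∪ {b})`), so `Λ \ I = B(x)`.
Then every vertex is at most `x`, two distinct vertices `u, v` with `2u, 2v ≥ x` sum to more
than `x` and hence lie in `I`, i.e. they are adjacent, and `y ↦ x - y` maps the remaining
vertices into this upper half, missing `x`. So more than half of the vertices form a clique,
which with at least 8 vertices gives a `K₅`, in particular a subdivision of `K₅`.
-/

namespace SimpleGraph

variable {α β : Type*} {G : SimpleGraph α}

lemma IsClique.exists_isNClique {s : Set α} (hs : G.IsClique s) {n : ℕ} (hn : n ≤ s.ncard) :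
    ∃ t : Finset α, G.IsNClique n t := by
  obtain ⟨t, hts, htn⟩ := Set.exists_subset_card_eq hn
  rcases n.eq_zero_or_pos with rfl | hpos
  · exact ⟨∅, by simp⟩
  have ht : t.Finite := Set.finite_of_ncard_pos (htn ▸ hpos)
  refine ⟨ht.toFinset, ?_, ?_⟩
  · simpa using hs.subset hts
  · rw [← htn, Set.ncard_eq_toFinset_card t ht]

lemma IsContained.containsSubdivision {H : SimpleGraph β} (h : H ⊑ G) :
    G.ContainsSubdivision H := by
  obtain ⟨f⟩ := h
  refine ⟨⟨f, f.injective⟩, fun i j hij => (f.toHom.map_adj hij).toWalk,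
    fun i j hij => (f.toHom.map_adj hij).isPath_toWalk, ?_, ?_⟩
  · intro i j hij k hk
    simp only [Adj.support_toWalk, List.mem_cons, List.not_mem_nil, or_false] at hk
    exact hk.imp (fun e => f.injective e) (fun e => f.injective e)
  · intro i j hij i' j' _ _ v hv _
    simpa [Adj.support_toWalk] using hv

end SimpleGraph

section NumericalSemigroup

variable {Λ I : Set ℕ} {x y : ℕ}

lemma le_of_mem_Bset (hy : y ∈ Bset Λ x) : y ≤ x := by
  obtain ⟨-, z, -, rfl⟩ := hy
  omega

lemma finite_Bset : (Bset Λ x).Finite :=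
  (Set.finite_Iic x).subset fun _ => le_of_mem_Bset

lemma sub_mem_Bset (hy : y ∈ Bset Λ x) : x - y ∈ Bset Λ x := by
  obtain ⟨hyΛ, z, hz, rfl⟩ := hy
  exact ⟨by simpa using hz, y, hyΛ, by omega⟩

lemma self_mem_Bset (h0 : 0 ∈ Λ) (hadd : ∀ a ∈ Λ, ∀ b ∈ Λ, a + b ∈ Λ) (hy : y ∈ Bset Λ x) :
    x ∈ Bset Λ x := by
  obtain ⟨hyΛ, z, hz, rfl⟩ := hy
  exact ⟨hadd y hyΛ z hz, 0, h0, rfl⟩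

lemma IsIdeal.finite_diff (hΛ : IsNumericalSemigroup Λ) (hI : IsIdeal Λ I) : (Λ \ I).Finite := by
  obtain ⟨i, hi⟩ := hI.1
  obtain ⟨m, hm⟩ := hΛ.2.2.bddAbove
  refine (Set.finite_Iic (i + m)).subset fun n hn => Set.mem_Iic.2 (not_lt.1 fun hlt => ?_)
  have hni : n - i ∈ Λ := by_contra fun h => by have := hm h; omega
  exact hn.2 (Nat.add_sub_cancel' (show i ≤ n by omega) ▸ hI.2.2 i hi _ hni)

lemma exists_maximal_diff (h0 : 0 ∈ Λ) (hadd : ∀ a ∈ Λ, ∀ b ∈ Λ, a + b ∈ Λ)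
    (hfin : (Λ \ I).Finite) (hy : y ∈ Λ \ I) :
    ∃ a ∈ Λ \ I, y ∈ Bset Λ a ∧ ∀ s ∈ Λ, s ≠ 0 → a + s ∈ I := by
  obtain ⟨a, ⟨ha, hya⟩, hmax⟩ := Set.exists_max_image {a ∈ Λ \ I | y ∈ Bset Λ a} id
    (hfin.subset fun _ h => h.1) ⟨y, hy, hy.1, 0, h0, rfl⟩
  refine ⟨a, ha, hya, fun s hs hs0 => by_contra fun has => ?_⟩
  obtain ⟨-, z, hz, rfl⟩ := hya
  have := hmax (y + z + s) ⟨⟨hadd _ ha.1 s hs, has⟩, hy.1, z + s, hadd z hz s hs, by omega⟩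
  simp only [id_eq] at this
  omega

lemma IsIdeal.insert {a : ℕ} (hI : IsIdeal Λ I) (ha : a ∈ Λ)
    (hmax : ∀ s ∈ Λ, s ≠ 0 → a + s ∈ I) : IsIdeal Λ (insert a I) := by
  refine ⟨Set.insert_nonempty a I, Set.insert_subset ha hI.2.1, ?_⟩
  rintro i (rfl | hi) s hs
  · rcases eq_or_ne s 0 with rfl | hs0
    · simp
    · exact Or.inr (hmax s hs hs0)
  · exact Or.inr (hI.2.2 i hi s hs)

lemma IsIrreducibleIdeal.eq_of_maximal (hI : IsIrreducibleIdeal Λ I) {a b : ℕ}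
    (ha : a ∈ Λ \ I) (hamax : ∀ s ∈ Λ, s ≠ 0 → a + s ∈ I)
    (hb : b ∈ Λ \ I) (hbmax : ∀ s ∈ Λ, s ≠ 0 → b + s ∈ I) : a = b := by
  by_contra hab
  refine hI.2 ⟨insert a I, insert b I, hI.1.insert ha.1 hamax, hI.1.insert hb.1 hbmax,
    fun h => ?_, fun h => ?_, Set.ssubset_insert ha.2, Set.ssubset_insert hb.2, ?_⟩
  · have : b ∈ insert a I := h ▸ hb.1
    grind
  · have : a ∈ insert b I := h ▸ ha.1
    grind
  · ext
    grind

theorem IsIrreducibleIdeal.exists_diff_eq_Bset (hΛ : IsNumericalSemigroup Λ)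
    (hI : IsIrreducibleIdeal Λ I) (hne : (Λ \ I).Nonempty) : ∃ x, Λ \ I = Bset Λ x := by
  have hfin := hI.1.finite_diff hΛ
  obtain ⟨h0, hadd, -⟩ := hΛ
  obtain ⟨y, hy⟩ := hne
  obtain ⟨x, hx, -, hxmax⟩ := exists_maximal_diff h0 hadd hfin hy
  refine ⟨x, Set.Subset.antisymm (fun w hw => ?_) ?_⟩
  · obtain ⟨a, ha, hwa, hamax⟩ := exists_maximal_diff h0 hadd hfin hw
    rwa [hI.eq_of_maximal ha hamax hx hxmax] at hwa
  · rintro w ⟨hw, z, hz, rfl⟩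
    exact ⟨hw, fun hwI => hx.2 (hI.1.2.2 w hwI z hz)⟩

lemma add_mem_of_diff_eq_Bset (hadd : ∀ a ∈ Λ, ∀ b ∈ Λ, a + b ∈ Λ) (hx : Λ \ I = Bset Λ x)
    {u v : ℕ} (hu : u ∈ Λ) (hv : v ∈ Λ) (huv : u ≠ v) (hxu : x ≤ 2 * u) (hxv : x ≤ 2 * v) :
    u + v ∈ I := by
  by_contra h
  have : u + v ∈ Bset Λ x := hx ▸ ⟨hadd u hu v hv, h⟩
  have := le_of_mem_Bset this
  omega

lemma ncard_lt_two_mul_ncard_upper_half (h0 : 0 ∈ Λ) (hadd : ∀ a ∈ Λ, ∀ b ∈ Λ, a + b ∈ Λ)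
    (hx : Λ \ I = Bset Λ x) (hV : ((Λ \ I) \ {0}).Nonempty) :
    ((Λ \ I) \ {0}).ncard < 2 * {y ∈ (Λ \ I) \ {0} | x ≤ 2 * y}.ncard := by
  set V := (Λ \ I) \ {0}
  set B := {y ∈ V | x ≤ 2 * y}
  have hVfin : V.Finite := (hx ▸ finite_Bset : (Λ \ I).Finite).sdiff
  have hBfin : B.Finite := hVfin.subset fun _ h => h.1
  have hxB : x ∈ B := by
    obtain ⟨y, hy, hy0⟩ := hV
    have hyx := le_of_mem_Bset (hx ▸ hy)
    refine ⟨⟨hx ▸ self_mem_Bset h0 hadd (hx ▸ hy), fun (hx0 : x = 0) => hy0 ?_⟩, by omega⟩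
    show y = 0
    omega
  have hcover : V ⊆ B ∪ (x - ·) '' (B \ {x}) := by
    intro y hy
    by_cases hyx : x ≤ 2 * y
    · exact Or.inl ⟨hy, hyx⟩
    have hy0 : y ≠ 0 := hy.2
    have hyx' := le_of_mem_Bset (hx ▸ hy.1)
    refine Or.inr ⟨x - y, ⟨⟨⟨hx ▸ sub_mem_Bset (hx ▸ hy.1), ?_⟩, by omega⟩, ?_⟩,
      show x - (x - y) = y by omega⟩
    all_goals rw [Set.mem_singleton_iff]; omega
  calc V.ncard ≤ (B ∪ (x - ·) '' (B \ {x})).ncard :=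
        Set.ncard_le_ncard hcover (hBfin.union (hBfin.sdiff.image _))
    _ ≤ B.ncard + ((x - ·) '' (B \ {x})).ncard := Set.ncard_union_le _ _
    _ ≤ B.ncard + (B \ {x}).ncard := Nat.add_le_add_left (Set.ncard_image_le hBfin.sdiff) _
    _ < 2 * B.ncard := by
      have := (Set.ncard_pos hBfin).2 ⟨x, hxB⟩
      rw [Set.ncard_sdiff_singleton_of_mem hxB]
      omega

lemma semigroupGraph_isClique_upper_half (hadd : ∀ a ∈ Λ, ∀ b ∈ Λ, a + b ∈ Λ)
    (hx : Λ \ I = Bset Λ x) :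
    (semigroupGraph Λ I).IsClique (Subtype.val ⁻¹' {y ∈ (Λ \ I) \ {0} | x ≤ 2 * y}) :=
  fun u hu v hv huv => ⟨Subtype.coe_ne_coe.2 huv,
    add_mem_of_diff_eq_Bset hadd hx u.2.1.1 v.2.1.1 (Subtype.coe_ne_coe.2 huv) hu.2 hv.2⟩

end NumericalSemigroup

/-- If `I` is an irreducible ideal and `G_I(Λ)` has at least 8
vertices, then it contains a `K₅` (a 5-clique) and hence is not planar. -/
theorem semigroupGraph_K5_of_eight_vertices (Λ I : Set ℕ)
    (hΛ : IsNumericalSemigroup Λ) (hI : IsIrreducibleIdeal Λ I)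
    (h8 : 8 ≤ ((Λ \ I) \ {0}).ncard) :
    (∃ t : Finset ↥((Λ \ I) \ {0}), (semigroupGraph Λ I).IsNClique 5 t) ∧
    ¬ (semigroupGraph Λ I).Planar := by
  have hV : ((Λ \ I) \ {0}).Nonempty := Set.nonempty_of_ncard_ne_zero (by omega)
  obtain ⟨x, hx⟩ := hI.exists_diff_eq_Bset hΛ (hV.mono Set.sdiff_subset)
  have hupper := ncard_lt_two_mul_ncard_upper_half hΛ.1 hΛ.2.1 hx hV
  have hcard : 5 ≤ (Subtype.val ⁻¹' {y ∈ (Λ \ I) \ {0} | x ≤ 2 * y} :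
      Set ↥((Λ \ I) \ {0})).ncard := by
    rw [Set.ncard_preimage_of_injective_subset_range Subtype.val_injective
      fun y hy => ⟨⟨y, hy.1⟩, rfl⟩]
    omega
  obtain ⟨t, ht⟩ := (semigroupGraph_isClique_upper_half hΛ.2.1 hx).exists_isNClique hcard
  have hK5 := (SimpleGraph.not_cliqueFree_iff_top_isContained 5).1 fun h => h t ht
  exact ⟨⟨t, ht⟩, fun hplanar => hplanar.1 hK5.containsSubdivision⟩
end

section
/- Let Λ be a numerical semigroup and x ∈ Λ. Suppose x = u·a_i = v·a_j = w·a_k for three distinct minimal generators a_i < a_j < a_k of Λ with u, v, w ≥ 2. Then u ≥ 5 and B(x) \ {0} has at least 7 elements. -/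
/-! Since `x = u·aᵢ = v·aⱼ = w·a_k` with `aᵢ < aⱼ < a_k`, the coefficients satisfy
`2 ≤ w < v < u`. If `u = 4` then `w = 2` and `a_k = 2aᵢ`, which is not a minimal
generator; so `u ≥ 5`. Then `aᵢ, 2aᵢ, 3aᵢ, 4aᵢ, aⱼ, a_k, x` are seven distinct nonzero
elements of `B(x)`: `aⱼ` and `a_k` are minimal generators, hence no multiple `m·aᵢ` with
`m ≥ 2`, and `x` exceeds all the others. -/

namespace IsNumericalSemigroup

variable {Λ : Set ℕ}

theorem mul_mem (hΛ : IsNumericalSemigroup Λ) {a : ℕ} (ha : a ∈ Λ) (n : ℕ) :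
    n * a ∈ Λ := by
  induction n with
  | zero => simpa using hΛ.1
  | succ n ih => simpa [Nat.succ_mul] using hΛ.2.1 _ ih _ ha

theorem mul_mem_Bset (hΛ : IsNumericalSemigroup Λ) {a m n x : ℕ} (ha : a ∈ Λ) (hmn : m ≤ n)
    (hx : x = n * a) : m * a ∈ Bset Λ x :=
  ⟨hΛ.mul_mem ha m, (n - m) * a, hΛ.mul_mem ha _,
    by rw [hx, ← Nat.add_mul, Nat.add_sub_cancel' hmn]⟩

theorem ne_mul_of_mem_MinimalGenerators (hΛ : IsNumericalSemigroup Λ) {a b m : ℕ}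
    (ha : a ∈ MinimalGenerators Λ) (hb : b ∈ Λ) (hb0 : b ≠ 0) (hm : 2 ≤ m) :
    a ≠ m * b := by
  rintro rfl
  obtain ⟨k, rfl⟩ := Nat.exists_eq_add_of_le' hm
  exact ha.2.2 ⟨b, hb, (k + 1) * b, hΛ.mul_mem hb _, hb0, by positivity, by ring⟩

end IsNumericalSemigroup

theorem Nat.lt_of_mul_eq_mul_of_lt {a b c d : ℕ} (h : c * b = d * a) (hab : a < b)
    (hc : 0 < c) : c < d :=
  Nat.lt_of_mul_lt_mul_right (a := a) (h ▸ Nat.mul_lt_mul_of_pos_left hab hc)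

theorem Bset_subset_Iic (Λ : Set ℕ) (x : ℕ) : Bset Λ x ⊆ Set.Iic x := by
  rintro y ⟨-, z, -, rfl⟩
  exact Nat.le_add_right y z

theorem card_le_ncard_Bset_diff_zero {Λ : Set ℕ} {x : ℕ} {S : Finset ℕ}
    (hS : ∀ y ∈ S, y ∈ Bset Λ x ∧ y ≠ 0) : S.card ≤ (Bset Λ x \ {0}).ncard := by
  rw [← Set.ncard_coe_finset]
  exact Set.ncard_le_ncard (fun y hy => hS y hy)
    ((Set.finite_Iic x).subset (Set.sdiff_subset.trans (Bset_subset_Iic Λ x)))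

theorem Bset_card_of_three_single_representations_general (Λ : Set ℕ)
    (hΛ : IsNumericalSemigroup Λ) (x ai aj ak u v w : ℕ)
    (hai : ai ∈ MinimalGenerators Λ) (haj : aj ∈ MinimalGenerators Λ)
    (hak : ak ∈ MinimalGenerators Λ)
    (hij : ai < aj) (hjk : aj < ak)
    (hw : 2 ≤ w)
    (h1 : x = u * ai) (h2 : x = v * aj) (h3 : x = w * ak) :
    5 ≤ u ∧ 7 ≤ (Bset Λ x \ {0}).ncard := by
  have hai0 : ai ≠ 0 := hai.2.1
  have hwv : w < v := Nat.lt_of_mul_eq_mul_of_lt (h3.symm.trans h2) hjk (by omega)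
  have hvu : v < u := Nat.lt_of_mul_eq_mul_of_lt (h2.symm.trans h1) hij (by omega)
  have not_mul : ∀ a ∈ MinimalGenerators Λ, ∀ m, 2 ≤ m → a ≠ m * ai :=
    fun a ha m hm => hΛ.ne_mul_of_mem_MinimalGenerators ha hai.1 hai0 hm
  have hu : 5 ≤ u := by
    by_contra! hu
    obtain ⟨rfl, rfl⟩ : u = 4 ∧ w = 2 := by omega
    exact not_mul ak hak 2 le_rfl (by omega)
  refine ⟨hu, ?_⟩
  have hx_ai : 5 * ai ≤ x := h1 ▸ Nat.mul_le_mul_right ai hu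
  have hx_aj : 2 * aj ≤ x := h2 ▸ Nat.mul_le_mul_right aj (by omega)
  have hx_ak : 2 * ak ≤ x := h3 ▸ Nat.mul_le_mul_right ak hw
  have haj_ne : aj ≠ 2 * ai ∧ aj ≠ 3 * ai ∧ aj ≠ 4 * ai :=
    ⟨not_mul aj haj 2 (by norm_num), not_mul aj haj 3 (by norm_num),
      not_mul aj haj 4 (by norm_num)⟩
  have hak_ne : ak ≠ 2 * ai ∧ ak ≠ 3 * ai ∧ ak ≠ 4 * ai :=
    ⟨not_mul ak hak 2 (by norm_num), not_mul ak hak 3 (by norm_num),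
      not_mul ak hak 4 (by norm_num)⟩
  have hB : ∀ y ∈ ({ai, 2 * ai, 3 * ai, 4 * ai, aj, ak, x} : Finset ℕ),
      y ∈ Bset Λ x ∧ y ≠ 0 := by
    simp only [Finset.mem_insert, Finset.mem_singleton]
    rintro y (rfl | rfl | rfl | rfl | rfl | rfl | rfl)
    · simpa [hai0] using hΛ.mul_mem_Bset hai.1 (by omega : 1 ≤ u) h1
    · exact ⟨hΛ.mul_mem_Bset hai.1 (by omega) h1, by omega⟩
    · exact ⟨hΛ.mul_mem_Bset hai.1 (by omega) h1, by omega⟩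
    · exact ⟨hΛ.mul_mem_Bset hai.1 (by omega) h1, by omega⟩
    · simpa [haj.2.1] using hΛ.mul_mem_Bset haj.1 (by omega : 1 ≤ v) h2
    · simpa [hak.2.1] using hΛ.mul_mem_Bset hak.1 (by omega : 1 ≤ w) h3
    · exact ⟨h1 ▸ hΛ.mul_mem_Bset hai.1 le_rfl rfl, by omega⟩
  calc 7 = ({ai, 2 * ai, 3 * ai, 4 * ai, aj, ak, x} : Finset ℕ).card := by
        repeat rw [Finset.card_insert_of_notMem
          (by simp only [Finset.mem_insert, Finset.mem_singleton]; omega)]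
        rfl
    _ ≤ (Bset Λ x \ {0}).ncard := card_le_ncard_Bset_diff_zero hB

/-- If `x = u·aᵢ = v·aⱼ = w·a_k` with minimal generators
`aᵢ < aⱼ < a_k` and `u, v, w ≥ 2`, then `u ≥ 5` and `B(x) \ {0}` has at
least 7 elements. -/
theorem Bset_card_of_three_single_representations (Λ : Set ℕ)
    (hΛ : IsNumericalSemigroup Λ) (x ai aj ak u v w : ℕ)
    (hx : x ∈ Λ)
    (hai : ai ∈ MinimalGenerators Λ) (haj : aj ∈ MinimalGenerators Λ)
    (hak : ak ∈ MinimalGenerators Λ)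
    (hij : ai < aj) (hjk : aj < ak)
    (hu : 2 ≤ u) (hv : 2 ≤ v) (hw : 2 ≤ w)
    (h1 : x = u * ai) (h2 : x = v * aj) (h3 : x = w * ak) :
    5 ≤ u ∧ 7 ≤ (Bset Λ x \ {0}).ncard :=
  Bset_card_of_three_single_representations_general Λ hΛ x ai aj ak u v w hai haj hak hij hjk hw h1
    h2 h3
end

section
/- Let Λ be a numerical semigroup minimally generated by A, and let a_i, a_j ∈ A be distinct. If x = 2a_i + a_j and this is the only representation of x as a combination of minimal generators (|L_x^{(1)}| = 0, |L_x^{(2)}| = 1, L_x^{(p)} = ∅ for p ≥ 3), then B(x) \ {0} = {a_i, a_j, 2a_i, a_i + a_j, 2a_i + a_j}, so G_{Λ\B(x)}(Λ) has exactly 5 vertices. -/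
/-!
Every element of `Λ` factors into minimal generators, and factorizations of `y` and of
`x - y` add up to a factorization of `x`. As `2aᵢ + aⱼ` is the only factorization of `x`,
every `y ∈ B(x)` is the value of a factorization below it, i.e. of a sub-multiset of
`{aᵢ, aᵢ, aⱼ}`; conversely each such value lies in `B(x)`.
-/

open Finsupp

section Factorization

variable {Λ : Set ℕ}

def IsFactorization (Λ : Set ℕ) (n : ℕ) (u : ℕ →₀ ℕ) : Prop :=
  (↑u.support : Set ℕ) ⊆ MinimalGenerators Λ ∧ u.sum (fun a c => c * a) = n

namespace IsFactorization

variable {m n : ℕ} {u v : ℕ →₀ ℕ}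

lemma zero : IsFactorization Λ 0 0 := ⟨by simp, by simp⟩

lemma single {a : ℕ} (ha : a ∈ MinimalGenerators Λ) (c : ℕ) :
    IsFactorization Λ (c * a) (Finsupp.single a c) :=
  ⟨(Finset.coe_subset.2 support_single_subset).trans (by simpa using ha),
    by simp [sum_single_index]⟩

lemma add (hu : IsFactorization Λ m u) (hv : IsFactorization Λ n v) :
    IsFactorization Λ (m + n) (u + v) :=
  ⟨fun a ha => (Finset.mem_union.1 (support_add ha)).elim (fun h => hu.1 h) (fun h => hv.1 h),
    by rw [sum_add_index' (by simp) (fun _ _ _ => add_mul _ _ _), hu.2, hv.2]⟩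

lemma mem_Lrep (hu : IsFactorization Λ n u) : u ∈ Lrep Λ n u.support.card :=
  ⟨hu.1, rfl, hu.2⟩

lemma card_support_eq_two (hn : n ≠ 0) (hL1 : Lrep Λ n 1 = ∅)
    (hLp : ∀ p, 3 ≤ p → Lrep Λ n p = ∅) (hu : IsFactorization Λ n u) :
    u.support.card = 2 := by
  have hmem := hu.mem_Lrep
  rcases Nat.lt_or_ge u.support.card 3 with hlt | hge
  · interval_cases hcard : u.support.card
    · obtain rfl : u = 0 := support_eq_empty.1 (Finset.card_eq_zero.1 hcard)
      exact absurd hu.2 (by simpa using hn.symm)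
    · simp [hL1] at hmem
    · rfl
  · simp [hLp _ hge] at hmem

lemma unique (hn : n ≠ 0) (hL1 : Lrep Λ n 1 = ∅) (hL2 : (Lrep Λ n 2).ncard = 1)
    (hLp : ∀ p, 3 ≤ p → Lrep Λ n p = ∅) (hu : IsFactorization Λ n u)
    (hv : IsFactorization Λ n v) : u = v := by
  obtain ⟨w, hw⟩ := Set.ncard_eq_one.1 hL2
  have hu2 := hu.mem_Lrep
  have hv2 := hv.mem_Lrep
  rw [hu.card_support_eq_two hn hL1 hLp, hw] at hu2
  rw [hv.card_support_eq_two hn hL1 hLp, hw] at hv2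
  exact hu2.trans hv2.symm

end IsFactorization

lemma exists_isFactorization {n : ℕ} (hn : n ∈ Λ) : ∃ u, IsFactorization Λ n u := by
  induction n using Nat.strong_induction_on with
  | _ n ih =>
    by_cases h0 : n = 0
    · exact ⟨0, h0 ▸ .zero⟩
    by_cases hmin : n ∈ MinimalGenerators Λ
    · exact ⟨_, by simpa using IsFactorization.single hmin 1⟩
    obtain ⟨b, hb, c, hc, hb0, hc0, rfl⟩ : ∃ b ∈ Λ, ∃ c ∈ Λ, b ≠ 0 ∧ c ≠ 0 ∧ n = b + c := by
      by_contra h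
      exact hmin ⟨hn, h0, h⟩
    obtain ⟨u, hu⟩ := ih b (by omega) hb
    obtain ⟨v, hv⟩ := ih c (by omega) hc
    exact ⟨u + v, hu.add hv⟩

lemma exists_le_of_mem_Bset {x y : ℕ} {w : ℕ →₀ ℕ}
    (huniq : ∀ u, IsFactorization Λ x u → u = w) (hy : y ∈ Bset Λ x) :
    ∃ u ≤ w, IsFactorization Λ y u := by
  obtain ⟨hyΛ, z, hzΛ, rfl⟩ := hy
  obtain ⟨u, hu⟩ := exists_isFactorization hyΛ
  obtain ⟨v, hv⟩ := exists_isFactorization hzΛ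
  exact ⟨u, huniq _ (hu.add hv) ▸ le_self_add, hu⟩

lemma Finsupp.exists_sum_eq_of_le_single_add_single {a b m n : ℕ} (hab : a ≠ b)
    {u : ℕ →₀ ℕ} (hu : u ≤ single a m + single b n) :
    ∃ i ≤ m, ∃ j ≤ n, u.sum (fun c k => k * c) = i * a + j * b := by
  have hsupp : u.support ⊆ {a, b} :=
    (support_mono hu).trans <| support_add.trans <|
      Finset.union_subset_union support_single_subset support_single_subset
  refine ⟨u a, by simpa [hab] using hu a, u b, by simpa [hab.symm] using hu b, ?_⟩
  rw [sum_of_support_subset u hsupp _ (by simp), Finset.sum_pair hab]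

lemma subset_Bset_two_mul_add (h0 : 0 ∈ Λ) (hadd : ∀ a ∈ Λ, ∀ b ∈ Λ, a + b ∈ Λ)
    {a b : ℕ} (ha : a ∈ Λ) (hb : b ∈ Λ) (ha0 : a ≠ 0) (hb0 : b ≠ 0) :
    {a, b, 2 * a, a + b, 2 * a + b} ⊆ Bset Λ (2 * a + b) \ {0} := by
  have h2a : 2 * a ∈ Λ := two_mul a ▸ hadd _ ha _ ha
  simp only [Set.insert_subset_iff, Set.singleton_subset_iff, Set.mem_sdiff,
    Set.mem_singleton_iff]
  exact ⟨⟨⟨ha, a + b, hadd _ ha _ hb, by omega⟩, ha0⟩,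
    ⟨⟨hb, 2 * a, h2a, by omega⟩, hb0⟩,
    ⟨⟨h2a, b, hb, by omega⟩, by omega⟩,
    ⟨⟨hadd _ ha _ hb, a, ha, by omega⟩, by omega⟩,
    ⟨⟨hadd _ h2a _ hb, 0, h0, rfl⟩, by omega⟩⟩

end Factorization

/-- If `x = 2aᵢ + aⱼ` is the only representation of `x`
(`|L¹|=0`, `|L²|=1`, `Lᵖ=∅` for `p ≥ 3`), then
`B(x) \ {0} = {aᵢ, aⱼ, 2aᵢ, aᵢ+aⱼ, 2aᵢ+aⱼ}`, a set of 5 elements. -/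
theorem Bset_of_two_ai_plus_aj (Λ : Set ℕ)
    (hΛ : IsNumericalSemigroup Λ) (x ai aj : ℕ)
    (hai : ai ∈ MinimalGenerators Λ) (haj : aj ∈ MinimalGenerators Λ)
    (hij : ai ≠ aj) (hx : x = 2 * ai + aj)
    (hL1 : Lrep Λ x 1 = ∅) (hL2 : (Lrep Λ x 2).ncard = 1)
    (hLp : ∀ p, 3 ≤ p → Lrep Λ x p = ∅) :
    Bset Λ x \ {0} = {ai, aj, 2 * ai, ai + aj, 2 * ai + aj} ∧
    (Bset Λ x \ {0}).ncard = 5 := by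
  obtain ⟨h0, hadd, -⟩ := hΛ
  have hw : IsFactorization Λ x (single ai 2 + single aj 1) := by
    simpa [hx] using (IsFactorization.single hai 2).add (IsFactorization.single haj 1)
  obtain ⟨haiΛ, hai0, -⟩ := hai
  obtain ⟨hajΛ, haj0, haj_irred⟩ := haj
  have hB : Bset Λ x \ {0} = {ai, aj, 2 * ai, ai + aj, 2 * ai + aj} := by
    refine subset_antisymm ?_ (hx ▸ subset_Bset_two_mul_add h0 hadd haiΛ hajΛ hai0 haj0)
    rintro y ⟨hy, hy0⟩
    obtain ⟨u, hle, -, rfl⟩ :=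
      exists_le_of_mem_Bset (fun u hu => hu.unique (by omega) hL1 hL2 hLp hw) hy
    obtain ⟨i, hi, j, hj, hu⟩ := exists_sum_eq_of_le_single_add_single hij hle
    rw [hu] at hy0 ⊢
    interval_cases i <;> interval_cases j <;> simp_all
  have haj2 : aj ≠ 2 * ai := fun h => haj_irred ⟨ai, haiΛ, ai, haiΛ, hai0, hai0, by omega⟩
  refine ⟨hB, ?_⟩
  rw [hB]
  repeat rw [Set.ncard_insert_of_notMem (by simp; omega)]
  rw [Set.ncard_singleton]
end

section
/- Let Λ be a numerical semigroup with x = 2a_i, x = a_k + a_l, and x = a_m + a_n, where a_i, a_k, a_l, a_m, a_n are five distinct minimal generators, and these are the only representations of x. Then B(x) \ {0} = {a_i, 2a_i, a_k, a_l, a_m, a_n} has exactly 6 elements. -/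
/-!
Every element of `Λ` is a sum of minimal generators, so a decomposition `x = y + z` in `Λ`
refines to a factorization of `x` split into two sub-multisets. Each factorization of `x` lies in
some `L_x^{(p)}`, and the three given ones already exhaust the cardinalities allowed, so
`aᵢ + aᵢ`, `a_k + a_l`, `a_m + a_n` are the only factorizations of `x`. Their nonzero sub-sums are
the six listed elements, which are distinct because `2aᵢ = aᵢ + aᵢ` is not a minimal generator.
-/

def Factorizations (Λ : Set ℕ) (x : ℕ) : Set (Multiset ℕ) :=
  {m | (∀ a ∈ m, a ∈ MinimalGenerators Λ) ∧ m.sum = x}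

section Factorizations

variable {Λ : Set ℕ} {x : ℕ}

theorem MinimalGenerators.ne_add {a b c : ℕ} (ha : a ∈ MinimalGenerators Λ) (hb : b ∈ Λ)
    (hc : c ∈ Λ) (hb0 : b ≠ 0) (hc0 : c ≠ 0) : a ≠ b + c :=
  fun h => ha.2.2 ⟨b, hb, c, hc, hb0, hc0, h⟩

theorem exists_mem_factorizations {s : ℕ} (hs : s ∈ Λ) : ∃ m, m ∈ Factorizations Λ s := by
  induction s using Nat.strong_induction_on with
  | _ s ih =>
    by_cases hgen : s ∈ MinimalGenerators Λ
    · exact ⟨{s}, by simpa [Factorizations] using hgen⟩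
    obtain rfl | hs0 := eq_or_ne s 0
    · exact ⟨0, by simp [Factorizations]⟩
    obtain ⟨b, hb, c, hc, hb0, hc0, rfl⟩ : ∃ b ∈ Λ, ∃ c ∈ Λ, b ≠ 0 ∧ c ≠ 0 ∧ s = b + c := by
      by_contra h
      exact hgen ⟨hs, hs0, h⟩
    obtain ⟨mb, hmb, rfl⟩ := ih b (by omega) hb
    obtain ⟨mc, hmc, rfl⟩ := ih _ (by omega) hc
    refine ⟨mb + mc, fun a ha => ?_, Multiset.sum_add _ _⟩
    exact (Multiset.mem_add.mp ha).elim (hmb a) (hmc a)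

theorem exists_le_factorizations_of_mem_Bset {y : ℕ} (hy : y ∈ Bset Λ x) :
    ∃ m ∈ Factorizations Λ x, ∃ s ≤ m, s.sum = y := by
  obtain ⟨hyΛ, z, hzΛ, rfl⟩ := hy
  obtain ⟨my, hmy, rfl⟩ := exists_mem_factorizations hyΛ
  obtain ⟨mz, hmz, rfl⟩ := exists_mem_factorizations hzΛ
  refine ⟨my + mz, ⟨fun a ha => ?_, Multiset.sum_add _ _⟩, my, le_add_right le_rfl, rfl⟩
  exact (Multiset.mem_add.mp ha).elim (hmy a) (hmz a)

theorem toFinsupp_mem_Lrep {m : Multiset ℕ} (hm : m ∈ Factorizations Λ x) :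
    m.toFinsupp ∈ Lrep Λ x m.toFinset.card := by
  refine ⟨fun a ha => hm.1 a (Multiset.mem_toFinset.mp ha), rfl, ?_⟩
  conv_rhs => rw [← hm.2, ← Multiset.toFinsupp_toMultiset m, Finsupp.sum_toMultiset]
  simp only [smul_eq_mul]

theorem Lrep_zero_eq_empty (hx : x ≠ 0) : Lrep Λ x 0 = ∅ := by
  refine Set.eq_empty_of_forall_notMem fun u ⟨_, hcard, hsum⟩ => hx ?_
  rw [Finset.card_eq_zero, Finsupp.support_eq_empty] at hcard
  simp [← hsum, hcard]

theorem factorizations_subset_of_Lrep_subset {R : Set (Multiset ℕ)}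
    (hR : ∀ p, Lrep Λ x p ⊆ Multiset.toFinsupp '' R) : Factorizations Λ x ⊆ R := by
  intro m hm
  obtain ⟨m', hm', h⟩ := hR _ (toFinsupp_mem_Lrep hm)
  rwa [← Multiset.toFinsupp.injective h]

theorem Lrep_eq_image_of_ncard_le {p : ℕ} {R : Set (Multiset ℕ)} (hR : R ⊆ Factorizations Λ x)
    (hRp : ∀ m ∈ R, m.toFinset.card = p) (hfin : (Lrep Λ x p).Finite)
    (hcard : (Lrep Λ x p).ncard ≤ R.ncard) : Lrep Λ x p = Multiset.toFinsupp '' R := by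
  refine (Set.eq_of_subset_of_ncard_le ?_ ?_ hfin).symm
  · rintro _ ⟨m, hm, rfl⟩
    exact hRp m hm ▸ toFinsupp_mem_Lrep (hR hm)
  · rwa [Set.ncard_image_of_injective _ Multiset.toFinsupp.injective]

theorem Bset_diff_zero_subset {R : Set (Multiset ℕ)} (hR : Factorizations Λ x ⊆ R)
    (hR2 : ∀ m ∈ R, Multiset.card m = 2) : Bset Λ x \ {0} ⊆ insert x {a | ∃ m ∈ R, a ∈ m} := by
  rintro y ⟨hy, hy0 : y ≠ 0⟩
  obtain ⟨m, hm, s, hs, rfl⟩ := exists_le_factorizations_of_mem_Bset hy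
  have hm2 := hR2 m (hR hm)
  have hs2 : Multiset.card s ≤ 2 := hm2 ▸ Multiset.card_le_card hs
  interval_cases h : Multiset.card s
  · simp [Multiset.card_eq_zero.mp h] at hy0
  · obtain ⟨a, rfl⟩ := Multiset.card_eq_one.mp h
    exact Or.inr ⟨m, hR hm, Multiset.singleton_le.mp hs⟩
  · rw [Multiset.eq_of_le_of_card_le hs (by omega)]
    exact Or.inl hm.2

theorem factorizations_subset_of_Lrep_ncard {a b c d e : ℕ} (ha : a ∈ MinimalGenerators Λ)
    (hb : b ∈ MinimalGenerators Λ) (hc : c ∈ MinimalGenerators Λ) (hd : d ∈ MinimalGenerators Λ)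
    (he : e ∈ MinimalGenerators Λ) (hbc : b ≠ c) (hde : d ≠ e)
    (hbcde : ({b, c} : Multiset ℕ) ≠ {d, e}) (hx1 : x = 2 * a) (hx2 : x = b + c)
    (hx3 : x = d + e) (hL1 : (Lrep Λ x 1).ncard = 1) (hL2 : (Lrep Λ x 2).ncard = 2)
    (hLp : ∀ p, 3 ≤ p → Lrep Λ x p = ∅) : Factorizations Λ x ⊆ {{a, a}, {b, c}, {d, e}} := by
  have hpair {u v : ℕ} (hu : u ∈ MinimalGenerators Λ) (hv : v ∈ MinimalGenerators Λ)
      (huv : x = u + v) : ({u, v} : Multiset ℕ) ∈ Factorizations Λ x :=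
    ⟨by simp [hu, hv], by simp [huv]⟩
  refine factorizations_subset_of_Lrep_subset fun p => ?_
  match p with
  | 0 => simp [Lrep_zero_eq_empty (show x ≠ 0 by have := ha.2.1; omega)]
  | 1 =>
    rw [Lrep_eq_image_of_ncard_le (R := {{a, a}}) (by simpa using hpair ha ha (by omega))
      (by simp) (Set.finite_of_ncard_ne_zero (by simp [hL1])) (by simp [hL1])]
    exact Set.image_mono (by simp)
  | 2 =>
    rw [Lrep_eq_image_of_ncard_le (R := {{b, c}, {d, e}})
      (by simpa [Set.insert_subset_iff] using ⟨hpair hb hc hx2, hpair hd he hx3⟩)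
      (by simp [hbc, hde]) (Set.finite_of_ncard_ne_zero (by simp [hL2]))
      (by rw [hL2, Set.ncard_pair hbcde])]
    exact Set.image_mono (by simp)
  | p + 3 => simp [hLp (p + 3) (by omega)]

end Factorizations

theorem ncard_insert_range_eq {Λ : Set ℕ} {n c : ℕ} {f : Fin n → ℕ} (hf : Function.Injective f)
    (hgen : ∀ i, f i ∈ MinimalGenerators Λ) (hc : c ∉ MinimalGenerators Λ) :
    (insert c (Set.range f)).ncard = n + 1 := by
  rw [Set.ncard_insert_of_notMem (by rintro ⟨i, rfl⟩; exact hc (hgen i)),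
    Set.ncard_range_of_injective hf, Nat.card_fin]

/-- If `x = 2aᵢ = a_k + a_l = a_m + a_n` with five distinct
minimal generators and these are the only representations, then
`B(x) \ {0} = {aᵢ, 2aᵢ, a_k, a_l, a_m, a_n}` has exactly 6 elements. -/
theorem Bset_of_two_ai_and_two_pair_representations (Λ : Set ℕ)
    (hΛ : IsNumericalSemigroup Λ) (x ai ak al am an : ℕ)
    (hai : ai ∈ MinimalGenerators Λ) (hak : ak ∈ MinimalGenerators Λ)
    (hal : al ∈ MinimalGenerators Λ) (ham : am ∈ MinimalGenerators Λ)
    (han : an ∈ MinimalGenerators Λ)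
    (hdist : Function.Injective ![ai, ak, al, am, an])
    (hx1 : x = 2 * ai) (hx2 : x = ak + al) (hx3 : x = am + an)
    (hL1 : (Lrep Λ x 1).ncard = 1) (hL2 : (Lrep Λ x 2).ncard = 2)
    (hLp : ∀ p, 3 ≤ p → Lrep Λ x p = ∅) :
    Bset Λ x \ {0} = {ai, 2 * ai, ak, al, am, an} ∧
    (Bset Λ x \ {0}).ncard = 6 := by
  obtain ⟨h0, hadd, -⟩ := hΛ
  have hkl : ak ≠ al := by simpa using hdist.ne (by decide : (1 : Fin 5) ≠ 2)
  have hmn : am ≠ an := by simpa using hdist.ne (by decide : (3 : Fin 5) ≠ 4)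
  have hkm : ak ≠ am := by simpa using hdist.ne (by decide : (1 : Fin 5) ≠ 3)
  have hkn : ak ≠ an := by simpa using hdist.ne (by decide : (1 : Fin 5) ≠ 4)
  have hklmn : ({ak, al} : Multiset ℕ) ≠ {am, an} :=
    fun h => by simpa [hkm, hkn] using Multiset.ext.mp h ak
  have hfact := factorizations_subset_of_Lrep_ncard hai hak hal ham han hkl hmn hklmn hx1 hx2 hx3
    hL1 hL2 hLp
  have heq : Bset Λ x \ {0} = {ai, 2 * ai, ak, al, am, an} := by
    refine subset_antisymm (fun y hy => ?_) ?_
    · have := Bset_diff_zero_subset hfact (by simp) hy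
      simp only [Set.mem_insert_iff, Set.mem_singleton_iff, Set.mem_ofPred_eq, exists_eq_or_imp,
        exists_eq_left, Multiset.insert_eq_cons, Multiset.mem_cons, Multiset.mem_singleton] at this ⊢
      omega
    · have hB {y z : ℕ} (hy : y ∈ Λ) (hz : z ∈ Λ) (hyz : y + z = x) (hy0 : y ≠ 0) :
          y ∈ Bset Λ x \ {0} := ⟨⟨hy, z, hz, hyz⟩, hy0⟩
      simp only [Set.insert_subset_iff, Set.singleton_subset_iff]
      exact ⟨hB hai.1 hai.1 (by omega) hai.2.1,
        hB (hx1 ▸ hx2 ▸ hadd _ hak.1 _ hal.1) h0 (by omega) (by have := hai.2.1; omega),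
        hB hak.1 hal.1 hx2.symm hak.2.1, hB hal.1 hak.1 (by omega) hal.2.1,
        hB ham.1 han.1 hx3.symm ham.2.1, hB han.1 ham.1 (by omega) han.2.1⟩
  have h2ai : 2 * ai ∉ MinimalGenerators Λ :=
    fun h => MinimalGenerators.ne_add h hai.1 hai.1 hai.2.1 hai.2.1 (two_mul ai)
  have hrange : Set.range ![ai, ak, al, am, an] = {ai, ak, al, am, an} := by
    ext y
    simp only [Matrix.range_cons, Matrix.range_empty, Set.mem_union, Set.mem_insert_iff,
      Set.mem_singleton_iff]
    tauto
  rw [heq, Set.insert_comm, ← hrange]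
  exact ⟨rfl, ncard_insert_range_eq hdist (by simp [Fin.forall_fin_succ, hai, hak, hal, ham, han]) h2ai⟩
end
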